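/- For d ≥ 1 and 0 ≤ j ≤ d, the generating function identity Σ_{i=0}^{d} B(d,i,j) t^i / (1-t)^{d+1} = Σ_{r≥0} binom(d,j) r^j (r+1)^{d-j} t^r holds as an identity of formal power series, where B(d,i,j) is the number of signed permutations in B_d with i type-B descents and j negative entries. -/

import Mathlib

open Finset

/-- The set of descent positions (0-based: `k ∈ descSet σ` means a descent between
the 1-based positions `k+1` and `k+2`) of a permutation of `Fin n`. -/
def descSet {n : ℕ} (σ : Equiv.Perm (Fin n)) : Finset (Fin n) :=
  Finset.univ.filter (fun k => ∃ m : Fin n, (m : ℕ) = (k : ℕ) + 1 ∧ σ m < σ k)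

/-- The number of descents of a permutation of `Fin n`. -/
def des {n : ℕ} (σ : Equiv.Perm (Fin n)) : ℕ := (descSet σ).card

/-- `A d i j` : the number of permutations `σ` of `{1,…,d}` with `σ(1) = j` and
exactly `i` descents (in particular `A d i j = 0` for `i < 0` or `i ≥ d`). -/
noncomputable def A (d : ℕ) (i : ℤ) (j : ℕ) : ℕ :=
  Nat.card {σ : Equiv.Perm (Fin d) //
    (∀ k : Fin d, (k : ℕ) = 0 → (σ k : ℕ) + 1 = j) ∧ (des σ : ℤ) = i}

/-- A signed permutation of `{±1,…,±d}` (an element of the hyperoctahedral group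
`B_d`), encoded as an ordinary permutation together with a sign for each position. -/
abbrev SignedPerm (d : ℕ) := Equiv.Perm (Fin d) × (Fin d → Bool)

/-- The value `τ(k) ∈ ℤ` of a signed permutation at position `k ∈ {1,…,d}`
(1-based), with the convention `τ(0) = 0`. -/
def sval {d : ℕ} (τ : SignedPerm d) (k : ℕ) : ℤ :=
  if h : 1 ≤ k ∧ k ≤ d then
    (if τ.2 ⟨k - 1, by omega⟩ then -(((τ.1 ⟨k - 1, by omega⟩ : Fin d) : ℕ) + 1 : ℤ)
     else (((τ.1 ⟨k - 1, by omega⟩ : Fin d) : ℕ) + 1 : ℤ))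
  else 0

/-- The number of type-`B` descents of a signed permutation: the number of
`i ∈ {0,…,d-1}` with `τ(i) > τ(i+1)` (where `τ(0) = 0`). -/
def desB {d : ℕ} (τ : SignedPerm d) : ℕ :=
  ((Finset.range d).filter (fun k => sval τ (k + 1) < sval τ k)).card

/-- `N(τ)`: the number of `i ∈ {1,…,d}` with `τ(i) < 0`. -/
def negEntries {d : ℕ} (τ : SignedPerm d) : ℕ :=
  ((Finset.Icc 1 d).filter (fun k => sval τ k < 0)).card

/-- `B d i j`: the number of signed permutations in `B_d` with `i` type-`B`
descents and `j` negative entries. -/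
noncomputable def B (d i j : ℕ) : ℕ :=
  Nat.card {τ : SignedPerm d // desB τ = i ∧ negEntries τ = j}

/-! Count the maps `f : Fin d → ℤ` with `|f| ≤ r` and exactly `j` negative values in two ways.
Directly there are `binom(d,j) r^j (r+1)^(d-j)` of them. On the other hand, listing the positions
by increasing `|f|`, ties broken by the signed position, turns `f` into a signed permutation `τ`
with `N(τ) = j`, and `f` is recovered from `τ` and the values of `|f|` read along `τ`: a sequence
`0 = c₀ ≤ c₁ ≤ ⋯ ≤ c_d ≤ r` increasing strictly at every type-`B` descent of `τ`. Subtracting the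
number of earlier descents makes it an arbitrary weakly increasing sequence bounded by
`r - des_B(τ)`, and there are `binom(d + r - des_B(τ), d)` of those. Hence
`∑ᵢ B(d,i,j) binom(d + r - i, d) = binom(d,j) r^j (r+1)^(d-j)`, which is the coefficient of `t^r`
in `∑ᵢ B(d,i,j) tⁱ / (1-t)^(d+1)`. -/

theorem Int.mem_Icc_neg_iff_natAbs_le {x : ℤ} {r : ℕ} : x ∈ Icc (-(r : ℤ)) r ↔ x.natAbs ≤ r := by
  rw [mem_Icc]
  omega

namespace Fin

variable {n : ℕ}

theorem monotone_of_le_next {α : Type*} [Preorder α] {g : Fin n → α}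
    (h : ∀ k (hk : k + 1 < n), g ⟨k, by omega⟩ ≤ g ⟨k + 1, hk⟩) : Monotone g := by
  obtain _ | n := n
  · exact fun a => a.elim0
  · exact Fin.monotone_iff_le_succ.2 fun i => h i i.succ.isLt

theorem strictMono_of_lt_next {α : Type*} [Preorder α] {g : Fin n → α}
    (h : ∀ k (hk : k + 1 < n), g ⟨k, by omega⟩ < g ⟨k + 1, hk⟩) : StrictMono g := by
  obtain _ | n := n
  · exact fun a => a.elim0
  · exact Fin.strictMono_iff_lt_succ.2 fun i => h i i.succ.isLt

theorem val_le_of_strictMono {g : Fin n → ℕ} (hg : StrictMono g) (k : Fin n) : (k : ℕ) ≤ g k := by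
  obtain ⟨k, hk⟩ := k
  induction k with
  | zero => exact Nat.zero_le _
  | succ k ih =>
    exact (ih (by omega)).trans_lt
      (hg (show (⟨k, by omega⟩ : Fin n) < ⟨k + 1, hk⟩ from k.lt_succ_self))

theorem monotone_sub_val_of_strictMono {g : Fin n → ℕ} (hg : StrictMono g) :
    Monotone fun k => g k - k :=
  monotone_of_le_next fun k hk => by
    have := hg (show (⟨k, by omega⟩ : Fin n) < ⟨k + 1, hk⟩ from k.lt_succ_self)
    simp only
    omega

end Fin

theorem card_monotone_bounded (d R : ℕ) :
    #{a ∈ Fintype.piFinset fun _ : Fin d => range (R + 1) | Monotone a} = (d + R).choose d := by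
  rw [← card_range (d + R), ← card_powersetCard]
  have shift_strictMono {a : Fin d → ℕ} (ha : Monotone a) : StrictMono fun k => a k + k :=
    fun _ _ hxy => add_lt_add_of_le_of_lt (ha hxy.le) hxy
  refine card_bij' (fun a _ => univ.image fun k => a k + k)
    (fun s hs k => (s.orderEmbOfFin (mem_powersetCard.1 hs).2 k : ℕ) - k) ?_ ?_ ?_ ?_
  · intro a ha
    simp only [mem_filter, Fintype.mem_piFinset, mem_range] at ha
    refine mem_powersetCard.2 ⟨fun x hx => ?_, ?_⟩
    · obtain ⟨k, -, rfl⟩ := mem_image.1 hx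
      have := ha.1 k
      have := k.isLt
      rw [mem_range]
      omega
    · rw [card_image_of_injective _ (shift_strictMono ha.2).injective, card_univ, Fintype.card_fin]
  · intro s hs
    obtain ⟨hsub, hcard⟩ := mem_powersetCard.1 hs
    have hmono := Fin.monotone_sub_val_of_strictMono (s.orderEmbOfFin hcard).strictMono
    refine mem_filter.2 ⟨Fintype.mem_piFinset.2 fun k => mem_range.2 ?_, hmono⟩
    have hlast : d - 1 < d := by have := k.isLt; omega
    have h1 := hmono (show k ≤ ⟨d - 1, hlast⟩ from Fin.le_def.2 (by simp; omega))
    have h2 := mem_range.1 (hsub (s.orderEmbOfFin_mem hcard ⟨d - 1, hlast⟩))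
    simp only at h1
    omega
  · intro a ha
    have hmono := (mem_filter.1 ha).2
    have hcard : #(univ.image fun k => a k + k) = d := by
      rw [card_image_of_injective _ (shift_strictMono hmono).injective, card_univ, Fintype.card_fin]
    funext k
    rw [← orderEmbOfFin_unique hcard (fun x => mem_image_of_mem _ (mem_univ x))
      (shift_strictMono hmono)]
    simp
  · intro s hs
    obtain ⟨-, hcard⟩ := mem_powersetCard.1 hs
    simp only [Nat.sub_add_cancel (Fin.val_le_of_strictMono (s.orderEmbOfFin hcard).strictMono _)]
    rw [← coe_inj, coe_image, coe_univ, Set.image_univ, range_orderEmbOfFin]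

theorem card_bounded_with_negatives {ι : Type*} [Fintype ι] [DecidableEq ι] (r j : ℕ) :
    #{f ∈ Fintype.piFinset fun _ : ι => Icc (-(r : ℤ)) r | #{p | f p < 0} = j} =
      (Fintype.card ι).choose j * r ^ j * (r + 1) ^ (Fintype.card ι - j) := by
  set bounded := Fintype.piFinset fun _ : ι => Icc (-(r : ℤ)) r
  have hfiber (s : Finset ι) : {f ∈ bounded | ({p | f p < 0} : Finset ι) = s} =
      Fintype.piFinset fun p => if p ∈ s then Icc (-(r : ℤ)) (-1) else Icc 0 (r : ℤ) := by
    ext f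
    simp only [bounded, mem_filter, Fintype.mem_piFinset, Finset.ext_iff, mem_univ, true_and,
      ← forall_and]
    refine forall_congr' fun p => ?_
    split_ifs with hp <;> simp only [hp, mem_Icc, iff_true, iff_false] <;> omega
  have hcard (s) (hs : s ∈ powersetCard j (univ : Finset ι)) :
      #{f ∈ {f ∈ bounded | #{p | f p < 0} = j} | ({p | f p < 0} : Finset ι) = s} =
        r ^ j * (r + 1) ^ (Fintype.card ι - j) := by
    rw [mem_powersetCard_univ] at hs
    rw [filter_filter, filter_congr fun f _ => and_iff_right_of_imp fun h => h ▸ hs, hfiber,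
      Fintype.card_piFinset]
    simp only [apply_ite card, Int.card_Icc]
    rw [prod_ite, prod_const, prod_const, filter_mem_eq_inter, univ_inter, filter_not,
      filter_mem_eq_inter, univ_inter, ← compl_eq_univ_sdiff, card_compl, hs]
    simp
  rw [card_eq_sum_card_fiberwise (f := fun f => ({p | f p < 0} : Finset ι))
    (s := {f ∈ bounded | #{p | f p < 0} = j}) (t := powersetCard j univ)
    fun f hf => mem_powersetCard_univ.2 (mem_filter.1 hf).2, sum_congr rfl hcard, sum_const,
    card_powersetCard, card_univ, smul_eq_mul, mul_assoc]

namespace PowerSeries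

theorem eq_mk_mul_one_sub_X_pow {R : Type*} [CommRing R] {P : R⟦X⟧} {c : ℕ → R}
    (n : ℕ) (h : ∀ r, ∑ i ∈ range (r + 1), coeff i P * ((n + (r - i)).choose n : R) = c r) :
    P = mk c * (1 - X) ^ (n + 1) := by
  have hP : P * mk (fun m => ((n + m).choose n : R)) = mk c := by
    ext r
    rw [coeff_mul, Nat.sum_antidiagonal_eq_sum_range_succ_mk, coeff_mk, ← h]
    simp only [coeff_mk]
  rw [← hP, mul_assoc, mk_add_choose_mul_one_sub_pow_eq_one, mul_one]

end PowerSeries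

namespace SignedPerm

variable {d : ℕ} {f : Fin d → ℤ} {τ : SignedPerm d}

@[simp]
theorem sval_zero (τ : SignedPerm d) : sval τ 0 = 0 := rfl

theorem sval_succ (τ : SignedPerm d) {k : ℕ} (hk : k < d) :
    sval τ (k + 1) = if τ.2 ⟨k, hk⟩ then -(((τ.1 ⟨k, hk⟩ : ℕ) + 1 : ℕ) : ℤ)
      else (((τ.1 ⟨k, hk⟩ : ℕ) + 1 : ℕ) : ℤ) := by
  rw [sval, dif_pos ⟨by omega, by omega⟩]
  push_cast
  rfl

theorem sval_succ_neg_iff (τ : SignedPerm d) {k : ℕ} (hk : k < d) :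
    sval τ (k + 1) < 0 ↔ τ.2 ⟨k, hk⟩ = true := by
  rw [sval_succ τ hk]
  split_ifs with h <;> simp [h] <;> omega

theorem eq_of_sval_succ_eq (τ : SignedPerm d) {k l : ℕ} (hk : k < d) (hl : l < d)
    (h : sval τ (k + 1) = sval τ (l + 1)) : k = l := by
  rw [sval_succ τ hk, sval_succ τ hl] at h
  have : τ.1 ⟨k, hk⟩ = τ.1 ⟨l, hl⟩ := Fin.ext (by split_ifs at h <;> omega)
  exact congrArg Fin.val (τ.1.injective this)

theorem negEntries_eq_card (τ : SignedPerm d) : negEntries τ = #{k | τ.2 k = true} := by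
  refine card_bij' (fun i hi => ⟨i - 1, by simp at hi; omega⟩) (fun k _ => (k : ℕ) + 1)
    ?_ ?_ ?_ ?_
  · intro i hi
    simp only [mem_filter, mem_Icc] at hi
    obtain ⟨k, rfl⟩ : ∃ k, i = k + 1 := ⟨i - 1, by omega⟩
    simpa [← sval_succ_neg_iff τ (show k < d by omega)] using hi.2
  · intro k hk
    simp only [mem_filter, mem_univ, true_and] at hk
    simp only [mem_filter, mem_Icc, sval_succ_neg_iff τ k.isLt, hk, and_true]
    omega
  · intro i hi
    simp at hi
    simp only
    omega
  · intro k _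
    simp

theorem desB_le (τ : SignedPerm d) : desB τ ≤ d :=
  (card_filter_le _ _).trans_eq (card_range d)

def desBPrefix (τ : SignedPerm d) (k : ℕ) : ℕ :=
  #{i ∈ range k | sval τ (i + 1) < sval τ i}

@[simp]
theorem desBPrefix_zero (τ : SignedPerm d) : desBPrefix τ 0 = 0 := rfl

theorem desBPrefix_dim (τ : SignedPerm d) : desBPrefix τ d = desB τ := rfl

theorem desBPrefix_succ (τ : SignedPerm d) (k : ℕ) :
    desBPrefix τ (k + 1) = desBPrefix τ k + if sval τ (k + 1) < sval τ k then 1 else 0 := by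
  rw [desBPrefix, range_add_one, filter_insert]
  split_ifs with h
  · rw [card_insert_of_notMem (fun hk => by simp at hk)]
    rfl
  · rfl

theorem desBPrefix_le_desB (τ : SignedPerm d) {k : ℕ} (hk : k ≤ d) : desBPrefix τ k ≤ desB τ :=
  card_le_card (filter_subset_filter _ (range_subset_range.2 hk))

theorem one_le_desBPrefix_of_sval_neg (τ : SignedPerm d) {k : ℕ} (h : sval τ k < 0) :
    1 ≤ desBPrefix τ k := by
  induction k with
  | zero => simp at h
  | succ k ih =>
    rw [desBPrefix_succ]
    split_ifs with hdes
    · omega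
    · exact (ih (by omega)).trans (Nat.le_add_right _ _)

def signedLabel (f : Fin d → ℤ) (p : Fin d) : ℤ :=
  if f p < 0 then -(((p : ℕ) + 1 : ℕ) : ℤ) else (((p : ℕ) + 1 : ℕ) : ℤ)

def sortKey (f : Fin d → ℤ) (p : Fin d) : ℕ ×ₗ ℤ :=
  toLex ((f p).natAbs, signedLabel f p)

theorem sortKey_injective (f : Fin d → ℤ) : Function.Injective (sortKey f) := by
  intro p q h
  have h : signedLabel f p = signedLabel f q := congrArg Prod.snd (toLex.injective h)
  unfold signedLabel at h
  exact Fin.ext (by split_ifs at h <;> omega)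

/-- Lists the positions `p` in increasing order of `(|f p|, ±(p + 1))`, each signed by the sign
of `f p`. -/
def standardize (f : Fin d → ℤ) : SignedPerm d :=
  (Tuple.sort (sortKey f), fun k => decide (f (Tuple.sort (sortKey f) k) < 0))

theorem standardize_eq_iff :
    standardize f = τ ↔
      (∀ k, τ.2 k = decide (f (τ.1 k) < 0)) ∧ StrictMono (sortKey f ∘ τ.1) := by
  constructor
  · rintro rfl
    exact ⟨fun _ => rfl, (Tuple.monotone_sort _).strictMono_of_injective
      ((sortKey_injective f).comp (Equiv.injective _))⟩
  · rintro ⟨hsign, hmono⟩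
    have hσ : τ.1 = Tuple.sort (sortKey f) :=
      (Tuple.eq_sort_iff).2 ⟨hmono.monotone, fun a b hab h =>
        absurd (τ.1.injective (sortKey_injective f h)) hab.ne⟩
    ext1
    · exact hσ.symm
    · funext k
      rw [hsign, hσ]
      rfl

theorem signedLabel_eq_sval (hsign : ∀ k, τ.2 k = decide (f (τ.1 k) < 0)) {k : ℕ} (hk : k < d) :
    signedLabel f (τ.1 ⟨k, hk⟩) = sval τ (k + 1) := by
  rw [signedLabel, sval_succ τ hk, hsign]
  by_cases h : f (τ.1 ⟨k, hk⟩) < 0 <;> simp [h]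

/-- The second key components are the (distinct) entries of `τ` (`signedLabel_eq_sval`), so a tie
in `|f|` between neighbours is allowed exactly at an ascent of `τ`. -/
theorem sortKey_lt_sortKey_iff (hsign : ∀ k, τ.2 k = decide (f (τ.1 k) < 0)) {k : ℕ}
    (hk : k + 1 < d) :
    sortKey f (τ.1 ⟨k, by omega⟩) < sortKey f (τ.1 ⟨k + 1, hk⟩) ↔
      (f (τ.1 ⟨k, by omega⟩)).natAbs + (if sval τ (k + 1 + 1) < sval τ (k + 1) then 1 else 0) ≤
        (f (τ.1 ⟨k + 1, hk⟩)).natAbs := by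
  have hne : sval τ (k + 1) ≠ sval τ (k + 1 + 1) := fun h => by
    have := eq_of_sval_succ_eq τ (by omega) hk h
    omega
  rw [sortKey, sortKey, Prod.Lex.toLex_lt_toLex, signedLabel_eq_sval hsign,
    signedLabel_eq_sval hsign]
  split_ifs with hdes <;> omega

theorem standardize_eq_iff_adjacent :
    standardize f = τ ↔ (∀ k, τ.2 k = decide (f (τ.1 k) < 0)) ∧
      ∀ k (hk : k + 1 < d), (f (τ.1 ⟨k, by omega⟩)).natAbs +
        (if sval τ (k + 1 + 1) < sval τ (k + 1) then 1 else 0) ≤ (f (τ.1 ⟨k + 1, hk⟩)).natAbs := by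
  rw [standardize_eq_iff]
  refine and_congr_right fun hsign => ⟨fun hmono k hk => ?_, fun hadj => ?_⟩
  · exact (sortKey_lt_sortKey_iff hsign hk).1 (hmono (Fin.mk_lt_mk.2 k.lt_succ_self))
  · exact Fin.strictMono_of_lt_next fun k hk => (sortKey_lt_sortKey_iff hsign hk).2 (hadj k hk)

theorem desBPrefix_succ_le_natAbs (h : standardize f = τ) (k : Fin d) :
    desBPrefix τ (k + 1) ≤ (f (τ.1 k)).natAbs := by
  obtain ⟨hsign, hadj⟩ := standardize_eq_iff_adjacent.1 h
  obtain ⟨k, hk⟩ := k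
  induction k with
  | zero =>
    have hneg (h1 : sval τ (0 + 1) < 0) : f (τ.1 ⟨0, hk⟩) < 0 := by
      simpa [hsign] using (sval_succ_neg_iff τ hk).1 h1
    show desBPrefix τ (0 + 1) ≤ _
    rw [desBPrefix_succ, desBPrefix_zero, sval_zero]
    split_ifs with h1
    · have := hneg h1
      omega
    · omega
  | succ k ih =>
    have hstep := hadj k hk
    have hprev := ih (by omega)
    rw [desBPrefix_succ]
    simp only at hprev ⊢
    omega

theorem negEntries_standardize (f : Fin d → ℤ) : negEntries (standardize f) = #{p | f p < 0} := by
  rw [negEntries_eq_card]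
  exact card_equiv (Tuple.sort (sortKey f)) (by simp [standardize])

def toMonotone (τ : SignedPerm d) (f : Fin d → ℤ) (k : Fin d) : ℕ :=
  (f (τ.1 k)).natAbs - desBPrefix τ (k + 1)

def ofMonotone (τ : SignedPerm d) (a : Fin d → ℕ) (p : Fin d) : ℤ :=
  if τ.2 (τ.1.symm p) then -((a (τ.1.symm p) + desBPrefix τ (τ.1.symm p + 1) : ℕ) : ℤ)
  else ((a (τ.1.symm p) + desBPrefix τ (τ.1.symm p + 1) : ℕ) : ℤ)

theorem ofMonotone_apply (τ : SignedPerm d) (a : Fin d → ℕ) (k : Fin d) :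
    ofMonotone τ a (τ.1 k) = if τ.2 k then -((a k + desBPrefix τ (k + 1) : ℕ) : ℤ)
      else ((a k + desBPrefix τ (k + 1) : ℕ) : ℤ) := by
  simp [ofMonotone]

theorem natAbs_ofMonotone_apply (τ : SignedPerm d) (a : Fin d → ℕ) (k : Fin d) :
    (ofMonotone τ a (τ.1 k)).natAbs = a k + desBPrefix τ (k + 1) := by
  rw [ofMonotone_apply]
  split_ifs <;> omega

theorem ofMonotone_apply_neg_iff (τ : SignedPerm d) (a : Fin d → ℕ) (k : Fin d) :
    ofMonotone τ a (τ.1 k) < 0 ↔ τ.2 k = true := by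
  rw [ofMonotone_apply]
  split_ifs with h
  · have := one_le_desBPrefix_of_sval_neg τ ((sval_succ_neg_iff τ k.isLt).2 h)
    simp only [h, iff_true]
    omega
  · simp only [h, Bool.false_eq_true, iff_false, not_lt]
    positivity

theorem standardize_ofMonotone {a : Fin d → ℕ} (ha : Monotone a) :
    standardize (ofMonotone τ a) = τ := by
  refine standardize_eq_iff_adjacent.2 ⟨fun k => ?_, fun k hk => ?_⟩
  · simp [ofMonotone_apply_neg_iff]
  · have := ha (Fin.mk_le_mk.2 (Nat.le_succ k) : (⟨k, by omega⟩ : Fin d) ≤ ⟨k + 1, hk⟩)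
    have := desBPrefix_succ τ (k + 1)
    simp only [natAbs_ofMonotone_apply]
    omega

theorem monotone_toMonotone (h : standardize f = τ) : Monotone (toMonotone τ f) := by
  have hadj := (standardize_eq_iff_adjacent.1 h).2
  refine Fin.monotone_of_le_next fun k hk => ?_
  have := hadj k hk
  have := desBPrefix_succ τ (k + 1)
  have := desBPrefix_succ_le_natAbs h ⟨k, by omega⟩
  simp only [toMonotone]
  omega

theorem toMonotone_ofMonotone (τ : SignedPerm d) (a : Fin d → ℕ) :
    toMonotone τ (ofMonotone τ a) = a := by
  funext k
  simp [toMonotone, natAbs_ofMonotone_apply]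

theorem ofMonotone_toMonotone (h : standardize f = τ) : ofMonotone τ (toMonotone τ f) = f := by
  funext p
  obtain ⟨k, rfl⟩ := τ.1.surjective p
  have hsign := (standardize_eq_iff_adjacent.1 h).1 k
  have := desBPrefix_succ_le_natAbs h k
  rw [ofMonotone_apply, toMonotone, Nat.sub_add_cancel this, hsign]
  split_ifs with hneg <;> simp only [decide_eq_true_eq] at hneg <;> omega

theorem desB_standardize_le {r : ℕ} (hf : ∀ p, (f p).natAbs ≤ r) :
    desB (standardize f) ≤ r := by
  rcases Nat.eq_zero_or_pos d with rfl | hd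
  · exact (desB_le _).trans (Nat.zero_le r)
  · have := desBPrefix_succ_le_natAbs (f := f) rfl (⟨d - 1, by omega⟩ : Fin d)
    rw [Fin.val_mk, Nat.sub_add_cancel hd, desBPrefix_dim] at this
    exact this.trans (hf _)

theorem toMonotone_le {r : ℕ} (h : standardize f = τ)
    (hf : ∀ p, (f p).natAbs ≤ r) (k : Fin d) : toMonotone τ f k ≤ r - desB τ := by
  have hlast : d - 1 < d := by have := k.isLt; omega
  have hk := monotone_toMonotone h (show k ≤ ⟨d - 1, hlast⟩ from Fin.le_def.2 (by simp; omega))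
  have := hf (τ.1 ⟨d - 1, hlast⟩)
  simp only [toMonotone, Nat.sub_add_cancel (show 1 ≤ d by omega), desBPrefix_dim] at hk ⊢
  omega

theorem card_fiber_standardize (τ : SignedPerm d) {r : ℕ} (hr : desB τ ≤ r) :
    #{f ∈ Fintype.piFinset fun _ : Fin d => Icc (-(r : ℤ)) r | standardize f = τ} =
      (d + (r - desB τ)).choose d := by
  rw [← card_monotone_bounded]
  refine card_nbij' (toMonotone τ) (ofMonotone τ) (fun f hf => ?_) (fun a ha => ?_)
    (fun f hf => ofMonotone_toMonotone (mem_filter.1 hf).2) fun a _ => toMonotone_ofMonotone τ a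
  · simp only [coe_filter, Fintype.mem_piFinset, Int.mem_Icc_neg_iff_natAbs_le, mem_range,
      Set.mem_ofPred_eq] at hf ⊢
    exact ⟨fun k => Nat.lt_succ_of_le (toMonotone_le hf.2 hf.1 k), monotone_toMonotone hf.2⟩
  · simp only [coe_filter, Fintype.mem_piFinset, Int.mem_Icc_neg_iff_natAbs_le, mem_range,
      Set.mem_ofPred_eq] at ha ⊢
    refine ⟨fun p => ?_, standardize_ofMonotone ha.2⟩
    obtain ⟨k, rfl⟩ := τ.1.surjective p
    have := ha.1 k
    have := desBPrefix_le_desB τ (show (k : ℕ) + 1 ≤ d from k.isLt)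
    rw [natAbs_ofMonotone_apply]
    omega

end SignedPerm

theorem B_eq_card (d i j : ℕ) :
    B d i j = #{τ : SignedPerm d | desB τ = i ∧ negEntries τ = j} := by
  rw [B, Nat.card_eq_fintype_card, Fintype.card_subtype]

theorem B_eq_zero_of_lt {d i : ℕ} (h : d < i) (j : ℕ) : B d i j = 0 := by
  rw [B_eq_card, card_eq_zero, filter_eq_empty_iff]
  intro τ _ hτ
  have := SignedPerm.desB_le τ
  omega

theorem sum_B_mul (d j r : ℕ) (g : ℕ → ℕ) :
    ∑ i ∈ range (r + 1), B d i j * g i =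
      ∑ τ : SignedPerm d with negEntries τ = j ∧ desB τ ≤ r, g (desB τ) := by
  rw [← sum_fiberwise_of_maps_to (g := desB)
    fun τ hτ => mem_range.2 (Nat.lt_succ_of_le (mem_filter.1 hτ).2.2)]
  refine sum_congr rfl fun i hi => ?_
  rw [sum_congr rfl fun τ hτ => by rw [(mem_filter.1 hτ).2], sum_const, smul_eq_mul, B_eq_card,
    filter_filter]
  congr 3
  ext τ
  have := mem_range.1 hi
  constructor <;> rintro ⟨h1, h2⟩ <;> omega

open SignedPerm in
theorem sum_B_mul_choose (d j r : ℕ) :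
    ∑ i ∈ range (r + 1), B d i j * (d + (r - i)).choose d =
      d.choose j * r ^ j * (r + 1) ^ (d - j) := by
  have hcount := card_bounded_with_negatives (ι := Fin d) r j
  rw [Fintype.card_fin] at hcount
  rw [sum_B_mul, ← hcount, card_eq_sum_card_fiberwise (f := standardize)
    (t := {τ | negEntries τ = j ∧ desB τ ≤ r}) fun f hf => ?_]
  · refine sum_congr rfl fun τ hτ => ?_
    obtain ⟨hneg, hr⟩ := (mem_filter.1 hτ).2
    rw [filter_filter, ← card_fiber_standardize τ hr]
    refine congrArg card (filter_congr fun f _ => (and_iff_right_of_imp fun h => ?_).symm)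
    rw [← negEntries_standardize, h, hneg]
  · obtain ⟨hf, hneg⟩ := mem_filter.1 hf
    refine mem_filter.2 ⟨mem_univ _, (negEntries_standardize f).trans hneg,
      desB_standardize_le fun p => ?_⟩
    exact Int.mem_Icc_neg_iff_natAbs_le.1 (Fintype.mem_piFinset.1 hf p)

open PowerSeries in
theorem B_generating_function_general (d j : ℕ) :
    (∑ i ∈ Finset.range (d + 1),
        PowerSeries.monomial i ((B d i j : ℚ))) =
      PowerSeries.mk
          (fun r : ℕ => (d.choose j : ℚ) * (r : ℚ) ^ j * ((r : ℚ) + 1) ^ (d - j)) *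
        (1 - PowerSeries.X) ^ (d + 1) := by
  have hcoeff (i : ℕ) : coeff i (∑ k ∈ range (d + 1), monomial k (B d k j : ℚ)) = B d i j := by
    rw [map_sum, sum_eq_single i (fun k _ hki => by simp [coeff_monomial, hki.symm])]
    · simp
    · intro hi
      rw [B_eq_zero_of_lt (by simpa using hi)]
      simp
  refine eq_mk_mul_one_sub_X_pow d fun r => ?_
  simp only [hcoeff]
  exact_mod_cast sum_B_mul_choose d j r

open PowerSeries in
/-- The generating function identity
`(Σ_{i=0}^{d} B(d,i,j) tⁱ) / (1-t)^{d+1} = Σ_{r≥0} binom(d,j) rʲ (r+1)^{d-j} tʳ`,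
stated as an identity of formal power series over `ℚ`. -/
theorem B_generating_function (d j : ℕ) (hd : 1 ≤ d) (hj : j ≤ d) :
    (∑ i ∈ Finset.range (d + 1),
        PowerSeries.monomial i ((B d i j : ℚ))) =
      PowerSeries.mk
          (fun r : ℕ => (d.choose j : ℚ) * (r : ℚ) ^ j * ((r : ℚ) + 1) ^ (d - j)) *
        (1 - PowerSeries.X) ^ (d + 1) :=
  B_generating_function_general d j
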